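/- arXiv:0903.2226 — 2 statements merged into one kernel-verified Lean document; each statement's English description precedes it below -/
import Mathlib

section
/- Let X and Y be independent rate-1 exponential random variables, let α ≥ 2, r₁, r₂ ∈ (0,1] and ε > 0, and let δ₁, δ₂ : ℝ → ℝ satisfy δ_i(ρ) ≥ ρ^{−r_i+ε} for all sufficiently large ρ (i = 1,2). Define U(ρ) = P[1 + ρX < ρ^{r₁}] + ρ^{r₁}·Q(√(ρ^{r₁} δ₁(ρ)/2)) + P[ρ^α Y < (ρ^{r₂} − 1)(1 + ρX)] + ρ^{r₁+r₂}·Q(√(ρ^{r₂} δ₂(ρ)/2)). Then limsup_{ρ→∞} log U(ρ)/log ρ ≤ −min{1 − r₁, α − 1 − r₂}. (This is the stripping-decoder bound P(E_11) ⩽̇ P(O_11) + P(O_21) ≐ SNR^{−min{(1−r₁)^+,(α−1−r₂)^+}} of Theorem 1, for codebooks of sizes SNR^{r₁}, SNR^{r₂} whose minimum squared distances satisfy |Δx_i|² ⩾̇ SNR^{−r_i+ε}.) -/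
/-!
Each of the four terms of `U` is `⩽̇ ρ^(-min (1 - r₁) (α - 1 - r₂))`. The first is
`P[X < (ρ^r₁ - 1)/ρ] ≤ ρ^(r₁-1)`. The Chernoff bound `Q(t) ≤ exp(-t²/2)` makes the two Gaussian
terms at most `ρ^b exp(-ρ^ε/4)`, which decays faster than any power of `ρ`. The third event forces
either `X > T` or `ρ^α Y ≤ ρ^r₂ (1 + ρT)`; with `T` a multiple of `log ρ` both probabilities are
`⩽̇ ρ^(r₂+1-α)`. Finally the first term is at least `ρ^(-2)`, so `log U / log ρ` stays bounded
below and its `limsup` is not a junk value.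
-/

open MeasureTheory ProbabilityTheory Filter Real

noncomputable def gaussQ (t : ℝ) : ℝ := ((gaussianReal 0 1) (Set.Ici t)).toReal

open Asymptotics Set Topology

lemma isBigO_rpow_rpow_atTop_of_le {a b : ℝ} (h : a ≤ b) :
    (fun ρ : ℝ => ρ ^ a) =O[atTop] fun ρ => ρ ^ b := by
  refine IsBigO.of_bound' ?_
  filter_upwards [eventually_ge_atTop 1] with ρ hρ
  rw [norm_of_nonneg (by positivity), norm_of_nonneg (by positivity)]
  exact rpow_le_rpow_of_exponent_le hρ h

lemma isBigO_rpow_mul_exp_neg_rpow (b a : ℝ) {ε c : ℝ} (hε : 0 < ε) (hc : 0 < c) :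
    (fun ρ : ℝ => ρ ^ b * exp (-(c * ρ ^ ε))) =O[atTop] fun ρ => ρ ^ a := by
  have hlim : Tendsto (fun ρ : ℝ => ρ ^ (b - a) * exp (-(c * ρ ^ ε))) atTop (𝓝 0) := by
    refine ((tendsto_rpow_mul_exp_neg_mul_atTop_nhds_zero ((b - a) / ε) c hc).comp
      (tendsto_rpow_atTop hε)).congr' ?_
    filter_upwards [eventually_ge_atTop 0] with ρ hρ
    simp only [Function.comp, ← rpow_mul hρ, neg_mul, mul_div_cancel₀ _ hε.ne']
  refine (hlim.isBigO_one ℝ |>.mul (isBigO_refl (fun ρ : ℝ => ρ ^ a) atTop)).congr' ?_ ?_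
  · filter_upwards [eventually_gt_atTop 0] with ρ hρ
    rw [mul_right_comm, ← rpow_add hρ, sub_add_cancel]
  · exact .of_forall fun ρ => one_mul _

/-- The paper's `f(ρ) ⩽̇ ρ^a`. -/
def DotLE (f : ℝ → ℝ) (a : ℝ) : Prop := ∀ η > 0, f =O[atTop] fun ρ => ρ ^ (a + η)

namespace DotLE

variable {f g : ℝ → ℝ} {a b : ℝ}

lemma of_isBigO (h : f =O[atTop] fun ρ => ρ ^ a) : DotLE f a :=
  fun _ hη => h.trans (isBigO_rpow_rpow_atTop_of_le (by linarith))

lemma mono (hf : DotLE f a) (hab : a ≤ b) : DotLE f b :=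
  fun η hη => (hf η hη).trans (isBigO_rpow_rpow_atTop_of_le (by linarith))

lemma add (hf : DotLE f a) (hg : DotLE g a) : DotLE (f + g) a :=
  fun η hη => (hf η hη).add (hg η hη)

lemma const_mul (hf : DotLE f a) (c : ℝ) : DotLE (fun ρ => c * f ρ) a :=
  fun η hη => (hf η hη).const_mul_left c

lemma of_le (hg : DotLE g a) (h0 : ∀ᶠ ρ in atTop, 0 ≤ f ρ) (hfg : f ≤ᶠ[atTop] g) : DotLE f a :=
  fun η hη => (IsBigO.of_bound' (by
    filter_upwards [h0, hfg] with ρ h0 h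
    exact (norm_of_nonneg h0).trans_le (h.trans (le_abs_self _)))).trans (hg η hη)

lemma limsup_log_div_log_le (hf : DotLE f a) (hlow : ∃ b : ℝ, ∀ᶠ ρ in atTop, ρ ^ b ≤ f ρ) :
    limsup (fun ρ => log (f ρ) / log ρ) atTop ≤ a := by
  obtain ⟨b, hb⟩ := hlow
  have hlog : ∀ᶠ ρ in atTop, b * log ρ ≤ log (f ρ) ∧ 0 < log ρ := by
    filter_upwards [hb, eventually_gt_atTop 1] with ρ hρb hρ
    exact ⟨(log_rpow (by linarith) b).symm.trans_le (log_le_log (by positivity) hρb),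
      log_pos hρ⟩
  have hcobdd : IsCoboundedUnder (· ≤ ·) atTop fun ρ => log (f ρ) / log ρ :=
    isCoboundedUnder_le_of_eventually_le atTop (x := b) <| by
      filter_upwards [hlog] with ρ ⟨h, hpos⟩
      rwa [le_div_iff₀ hpos]
  refine le_of_forall_pos_le_add fun η hη => limsup_le_of_le hcobdd ?_
  obtain ⟨C, hC, hCf⟩ := (hf (η / 2) (by linarith)).exists_pos
  filter_upwards [hb, hlog, hCf.bound, eventually_gt_atTop 0,
    tendsto_log_atTop.eventually_ge_atTop (2 * log C / η)] with ρ hρb hlogρ hbound hρ hCρ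
  have hfρ : 0 < f ρ := (rpow_pos_of_pos hρ b).trans_le hρb
  rw [norm_of_nonneg hfρ.le, norm_of_nonneg (by positivity)] at hbound
  have hlogf : log (f ρ) ≤ log C + (a + η / 2) * log ρ := by
    rw [← log_rpow hρ, ← log_mul hC.ne' (by positivity)]
    exact log_le_log hfρ hbound
  have hlogC : log C ≤ η / 2 * log ρ := by
    rw [div_le_iff₀' hη] at hCρ
    linarith
  rw [div_le_iff₀ hlogρ.2]
  linarith

end DotLE

lemma dotLE_rpow_mul_log (a : ℝ) : DotLE (fun ρ => ρ ^ a * log ρ) a := fun η hη =>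
  ((isBigO_refl (fun ρ : ℝ => ρ ^ a) atTop).mul (isLittleO_log_rpow_atTop hη).isBigO).congr'
    (.of_forall fun _ => rfl)
    (by filter_upwards [eventually_gt_atTop 0] with ρ hρ using (rpow_add hρ a η).symm)

lemma gaussQ_nonneg (t : ℝ) : 0 ≤ gaussQ t := ENNReal.toReal_nonneg

lemma gaussQ_le_exp_neg_sq {t : ℝ} (ht : 0 ≤ t) : gaussQ t ≤ exp (-(t ^ 2 / 2)) := by
  have h := measure_ge_le_exp_mul_mgf (μ := gaussianReal 0 1) (X := id) t ht
    (integrable_exp_mul_gaussianReal t)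
  rw [mgf_id_gaussianReal, ← exp_add] at h
  convert h using 2
  · rfl
  · push_cast; ring

lemma isBigO_rpow_mul_gaussQ (b a : ℝ) {r ε : ℝ} {δ : ℝ → ℝ} (hε : 0 < ε)
    (hδ : ∀ᶠ ρ in atTop, ρ ^ (-r + ε) ≤ δ ρ) :
    (fun ρ => ρ ^ b * gaussQ (√(ρ ^ r * δ ρ / 2))) =O[atTop] fun ρ => ρ ^ a := by
  refine IsBigO.trans (IsBigO.of_bound' ?_)
    (isBigO_rpow_mul_exp_neg_rpow b a hε (by norm_num : (0 : ℝ) < 1 / 4))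
  filter_upwards [hδ, eventually_gt_atTop 0] with ρ hδρ hρ
  have hεδ : ρ ^ ε ≤ ρ ^ r * δ ρ := by
    calc ρ ^ ε = ρ ^ r * ρ ^ (-r + ε) := by rw [← rpow_add hρ]; ring_nf
      _ ≤ ρ ^ r * δ ρ := by gcongr
  have hQ : gaussQ (√(ρ ^ r * δ ρ / 2)) ≤ exp (-(1 / 4 * ρ ^ ε)) := by
    refine (gaussQ_le_exp_neg_sq (sqrt_nonneg _)).trans (exp_le_exp.2 ?_)
    rw [sq_sqrt (by linarith [rpow_pos_of_pos hρ ε])]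
    linarith
  rw [norm_of_nonneg (mul_nonneg (rpow_nonneg hρ.le b) (gaussQ_nonneg _)),
    norm_of_nonneg (by positivity)]
  gcongr

section Exponential

variable {Ω : Type*} [MeasurableSpace Ω] {P : Measure Ω} {X Y : Ω → ℝ}

lemma expMeasure_Iic_toReal {t : ℝ} (ht : 0 ≤ t) :
    (expMeasure 1 (Iic t)).toReal = 1 - exp (-t) := by
  have := isProbabilityMeasure_expMeasure one_pos
  have h := cdf_expMeasure_eq one_pos t
  rwa [cdf_eq_real, measureReal_def, if_pos ht, one_mul] at h

lemma prob_Iic_eq (hXm : Measurable X) (hX : P.map X = expMeasure 1) {t : ℝ} (ht : 0 ≤ t) :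
    (P (X ⁻¹' Iic t)).toReal = 1 - exp (-t) := by
  rw [← Measure.map_apply hXm measurableSet_Iic, hX, expMeasure_Iic_toReal ht]

lemma prob_Iic_le (hXm : Measurable X) (hX : P.map X = expMeasure 1) {t : ℝ} (ht : 0 ≤ t) :
    (P (X ⁻¹' Iic t)).toReal ≤ t := by
  rw [prob_Iic_eq hXm hX ht]
  linarith [add_one_le_exp (-t)]

lemma half_le_prob_Iic (hXm : Measurable X) (hX : P.map X = expMeasure 1) {t : ℝ} (ht0 : 0 ≤ t)
    (ht1 : t ≤ 1) : t / 2 ≤ (P (X ⁻¹' Iic t)).toReal := by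
  rw [prob_Iic_eq hXm hX ht0, exp_neg]
  have hexp : exp t * (exp t)⁻¹ = 1 := mul_inv_cancel₀ (exp_pos t).ne'
  nlinarith [add_one_le_exp t, inv_pos.2 (exp_pos t), mul_nonneg ht0 (sub_nonneg.2 ht1)]

lemma prob_Ioi_eq [IsProbabilityMeasure P] (hXm : Measurable X) (hX : P.map X = expMeasure 1)
    {t : ℝ} (ht : 0 ≤ t) : (P (X ⁻¹' Ioi t)).toReal = exp (-t) := by
  rw [← compl_Iic, preimage_compl, prob_compl_eq_one_sub (hXm measurableSet_Iic),
    ENNReal.toReal_sub_of_le prob_le_one ENNReal.one_ne_top, ENNReal.toReal_one,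
    prob_Iic_eq hXm hX ht]
  ring

lemma dotLE_prob_one_add_mul_lt_rpow [IsProbabilityMeasure P] (hXm : Measurable X)
    (hX : P.map X = expMeasure 1) {r : ℝ} (hr : 0 ≤ r) :
    DotLE (fun ρ => (P {ω | 1 + ρ * X ω < ρ ^ r}).toReal) (r - 1) := by
  refine .of_isBigO (IsBigO.of_bound' ?_)
  filter_upwards [eventually_ge_atTop 1] with ρ hρ
  have hρ0 : 0 < ρ := by linarith
  have hsub : {ω | 1 + ρ * X ω < ρ ^ r} ⊆ X ⁻¹' Iic ((ρ ^ r - 1) / ρ) := fun ω hω => by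
    rw [mem_ofPred_eq] at hω
    rw [mem_preimage, mem_Iic, le_div_iff₀ hρ0]
    linarith
  rw [norm_of_nonneg ENNReal.toReal_nonneg, norm_of_nonneg (by positivity)]
  calc (P {ω | 1 + ρ * X ω < ρ ^ r}).toReal ≤ (P (X ⁻¹' Iic ((ρ ^ r - 1) / ρ))).toReal :=
        measureReal_mono hsub
    _ ≤ (ρ ^ r - 1) / ρ :=
        prob_Iic_le hXm hX (div_nonneg (by linarith [one_le_rpow hρ hr]) hρ0.le)
    _ ≤ ρ ^ r / ρ := by gcongr; linarith
    _ = ρ ^ (r - 1) := (rpow_sub_one hρ0.ne' r).symm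

lemma eventually_rpow_neg_two_le_prob_one_add_mul_lt_rpow [IsProbabilityMeasure P]
    (hXm : Measurable X) (hX : P.map X = expMeasure 1) {r : ℝ} (hr : 0 < r) :
    ∀ᶠ ρ in atTop, ρ ^ (-2 : ℝ) ≤ (P {ω | 1 + ρ * X ω < ρ ^ r}).toReal := by
  filter_upwards [eventually_ge_atTop 4, (tendsto_rpow_atTop hr).eventually_ge_atTop 2]
    with ρ hρ hρr
  have hρ0 : 0 < ρ := by linarith
  have hsub : X ⁻¹' Iic (1 / (2 * ρ)) ⊆ {ω | 1 + ρ * X ω < ρ ^ r} := fun ω hω => by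
    rw [mem_preimage, mem_Iic, le_div_iff₀ (by positivity)] at hω
    rw [mem_ofPred_eq]
    linarith
  calc ρ ^ (-2 : ℝ) ≤ 1 / (2 * ρ) / 2 := by
        rw [rpow_neg hρ0.le, rpow_two, div_div, one_div]
        gcongr
        nlinarith
    _ ≤ (P (X ⁻¹' Iic (1 / (2 * ρ)))).toReal :=
        half_le_prob_Iic hXm hX (by positivity) (by rw [div_le_one (by positivity)]; linarith)
    _ ≤ (P {ω | 1 + ρ * X ω < ρ ^ r}).toReal := measureReal_mono hsub

lemma prob_mul_lt_mul_one_add_mul_le [IsProbabilityMeasure P] (hXm : Measurable X)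
    (hX : P.map X = expMeasure 1) (hYm : Measurable Y) (hY : P.map Y = expMeasure 1)
    {a c ρ T : ℝ} (ha : 0 < a) (hc : 0 ≤ c) (hρ : 0 ≤ ρ) (hT : 0 ≤ T) :
    (P {ω | a * Y ω < c * (1 + ρ * X ω)}).toReal ≤ exp (-T) + c * (1 + ρ * T) / a := by
  have hsub : {ω | a * Y ω < c * (1 + ρ * X ω)}
      ⊆ X ⁻¹' Ioi T ∪ Y ⁻¹' Iic (c * (1 + ρ * T) / a) := by
    intro ω hω
    by_cases hXT : X ω ≤ T
    · right
      rw [mem_ofPred_eq] at hω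
      rw [mem_preimage, mem_Iic, le_div_iff₀ ha]
      nlinarith [mul_le_mul_of_nonneg_left hXT (mul_nonneg hc hρ)]
    · exact .inl (lt_of_not_ge hXT)
  calc (P {ω | a * Y ω < c * (1 + ρ * X ω)}).toReal
      ≤ (P (X ⁻¹' Ioi T)).toReal + (P (Y ⁻¹' Iic (c * (1 + ρ * T) / a))).toReal :=
        (measureReal_mono hsub).trans (measureReal_union_le _ _)
    _ ≤ exp (-T) + c * (1 + ρ * T) / a := by
        rw [prob_Ioi_eq hXm hX hT]
        gcongr
        exact prob_Iic_le hYm hY (by positivity)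

lemma dotLE_prob_rpow_mul_lt [IsProbabilityMeasure P] (hXm : Measurable X)
    (hX : P.map X = expMeasure 1) (hYm : Measurable Y) (hY : P.map Y = expMeasure 1)
    {α r : ℝ} (hr : 0 ≤ r) :
    DotLE (fun ρ => (P {ω | ρ ^ α * Y ω < (ρ ^ r - 1) * (1 + ρ * X ω)}).toReal)
      (r + 1 - α) := by
  -- `T = K log ρ` gives `P[X > T] = ρ^(-K)`; `K` is clipped at `0` so that `T ≥ 0`.
  set K := max (α - r - 1) 0
  have hK0 : 0 ≤ K := le_max_right _ _
  have hKα : α - r - 1 ≤ K := le_max_left _ _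
  have hbound : DotLE (fun ρ => ρ ^ (-K) + ρ ^ (r - α) + K * (ρ ^ (r + 1 - α) * log ρ))
      (r + 1 - α) :=
    ((DotLE.of_isBigO (isBigO_rpow_rpow_atTop_of_le (by linarith))).add
      (.of_isBigO (isBigO_rpow_rpow_atTop_of_le (by linarith)))).add
      ((dotLE_rpow_mul_log _).const_mul K)
  refine hbound.of_le (.of_forall fun _ => ENNReal.toReal_nonneg) ?_
  filter_upwards [eventually_ge_atTop 1] with ρ hρ
  have hρ0 : 0 < ρ := by linarith
  calc (P {ω | ρ ^ α * Y ω < (ρ ^ r - 1) * (1 + ρ * X ω)}).toReal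
      ≤ exp (-(K * log ρ)) + (ρ ^ r - 1) * (1 + ρ * (K * log ρ)) / ρ ^ α :=
        prob_mul_lt_mul_one_add_mul_le hXm hX hYm hY (by positivity)
          (by linarith [one_le_rpow hρ hr]) hρ0.le (mul_nonneg hK0 (log_nonneg hρ))
    _ ≤ ρ ^ (-K) + ρ ^ r * (1 + ρ * (K * log ρ)) / ρ ^ α := by
        rw [rpow_def_of_pos hρ0 (-K), mul_neg, mul_comm]
        have := log_nonneg hρ
        gcongr
        linarith
    _ = ρ ^ (-K) + ρ ^ (r - α) + K * (ρ ^ (r + 1 - α) * log ρ) := by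
        rw [rpow_sub hρ0, rpow_sub hρ0, rpow_add_one hρ0.ne']
        ring

end Exponential

theorem stmt_6_general {Ω : Type*} [MeasurableSpace Ω] (P : Measure Ω) [IsProbabilityMeasure P]
    (X Y : Ω → ℝ) (hXm : Measurable X) (hYm : Measurable Y)
    (hX : Measure.map X P = expMeasure 1) (hY : Measure.map Y P = expMeasure 1)
    (α r₁ r₂ ε : ℝ)
    (hr₁0 : 0 < r₁) (hr₂0 : 0 < r₂) (hε : 0 < ε)
    (δ₁ δ₂ : ℝ → ℝ)
    (hδ₁ : ∀ᶠ ρ in atTop, (ρ : ℝ) ^ (-r₁ + ε) ≤ δ₁ ρ)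
    (hδ₂ : ∀ᶠ ρ in atTop, (ρ : ℝ) ^ (-r₂ + ε) ≤ δ₂ ρ)
    (U : ℝ → ℝ)
    (hU : ∀ ρ : ℝ, U ρ =
      (P {ω | 1 + ρ * X ω < ρ ^ r₁}).toReal
        + ρ ^ r₁ * gaussQ (Real.sqrt (ρ ^ r₁ * δ₁ ρ / 2))
        + (P {ω | ρ ^ α * Y ω < (ρ ^ r₂ - 1) * (1 + ρ * X ω)}).toReal
        + ρ ^ (r₁ + r₂) * gaussQ (Real.sqrt (ρ ^ r₂ * δ₂ ρ / 2))) :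
    Filter.limsup (fun ρ : ℝ => Real.log (U ρ) / Real.log ρ) atTop
      ≤ -min (1 - r₁) (α - 1 - r₂) := by
  have hU_dotLE : DotLE U (-min (1 - r₁) (α - 1 - r₂)) := by
    rw [funext hU]
    refine (((DotLE.add ?_ ?_).add ?_).add ?_)
    · exact (dotLE_prob_one_add_mul_lt_rpow hXm hX hr₁0.le).mono
        (by linarith [min_le_left (1 - r₁) (α - 1 - r₂)])
    · exact .of_isBigO (isBigO_rpow_mul_gaussQ _ _ hε hδ₁)
    · exact (dotLE_prob_rpow_mul_lt hXm hX hYm hY hr₂0.le).mono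
        (by linarith [min_le_right (1 - r₁) (α - 1 - r₂)])
    · exact .of_isBigO (isBigO_rpow_mul_gaussQ _ _ hε hδ₂)
  refine hU_dotLE.limsup_log_div_log_le ⟨-2, ?_⟩
  filter_upwards [eventually_rpow_neg_two_le_prob_one_add_mul_lt_rpow hXm hX hr₁0,
    eventually_ge_atTop 0] with ρ hlow hρ
  rw [hU]
  have h₂ := mul_nonneg (rpow_nonneg hρ r₁) (gaussQ_nonneg (√(ρ ^ r₁ * δ₁ ρ / 2)))
  have h₃ : 0 ≤ (P {ω | ρ ^ α * Y ω < (ρ ^ r₂ - 1) * (1 + ρ * X ω)}).toReal :=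
    ENNReal.toReal_nonneg
  have h₄ := mul_nonneg (rpow_nonneg hρ (r₁ + r₂)) (gaussQ_nonneg (√(ρ ^ r₂ * δ₂ ρ / 2)))
  linarith

/-- The stripping-decoder bound of Theorem 1:
`P(E_11) ⩽̇ P(O_11) + P(O_21) ≐ SNR^{−min{(1−r₁)^+, (α−1−r₂)^+}}`, for codebooks of
sizes `SNR^{r₁}, SNR^{r₂}` whose minimum squared distances satisfy
`δᵢ(ρ) ≥ ρ^{−rᵢ+ε}` eventually. -/
theorem stmt_6 {Ω : Type*} [MeasurableSpace Ω] (P : Measure Ω) [IsProbabilityMeasure P]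
    (X Y : Ω → ℝ) (hXm : Measurable X) (hYm : Measurable Y)
    (hX : Measure.map X P = expMeasure 1) (hY : Measure.map Y P = expMeasure 1)
    (hindep : IndepFun X Y P)
    (α r₁ r₂ ε : ℝ) (hα : 2 ≤ α)
    (hr₁0 : 0 < r₁) (hr₁1 : r₁ ≤ 1) (hr₂0 : 0 < r₂) (hr₂1 : r₂ ≤ 1) (hε : 0 < ε)
    (δ₁ δ₂ : ℝ → ℝ)
    (hδ₁ : ∀ᶠ ρ in atTop, (ρ : ℝ) ^ (-r₁ + ε) ≤ δ₁ ρ)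
    (hδ₂ : ∀ᶠ ρ in atTop, (ρ : ℝ) ^ (-r₂ + ε) ≤ δ₂ ρ)
    (U : ℝ → ℝ)
    (hU : ∀ ρ : ℝ, U ρ =
      (P {ω | 1 + ρ * X ω < ρ ^ r₁}).toReal
        + ρ ^ r₁ * gaussQ (Real.sqrt (ρ ^ r₁ * δ₁ ρ / 2))
        + (P {ω | ρ ^ α * Y ω < (ρ ^ r₂ - 1) * (1 + ρ * X ω)}).toReal
        + ρ ^ (r₁ + r₂) * gaussQ (Real.sqrt (ρ ^ r₂ * δ₂ ρ / 2))) :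
    Filter.limsup (fun ρ : ℝ => Real.log (U ρ) / Real.log ρ) atTop
      ≤ -min (1 - r₁) (α - 1 - r₂) :=
  stmt_6_general P X Y hXm hYm hX hY α r₁ r₂ ε hr₁0 hr₂0 hε δ₁ δ₂ hδ₁ hδ₂ U hU
end

section
/- Let X and Y be independent rate-1 exponential random variables, let α ≥ 0 and r > 0. Then lim_{ρ→∞} log P[ρX + ρ^α Y < ρ^r − 1] / log ρ = −((1−r)^+ + (α−r)^+). (This joint outage event, with r = r₁ + r₂, yields the sum-rate exponent d_MU³(r) = (1−r₁−r₂)^+ + (α−r₁−r₂)^+ appearing in the multiuser (public-messages-only, p_i = −∞) branch d_MU of the fixed-power-split Han–Kobayashi DMT of Theorem 2.) -/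
open MeasureTheory ProbabilityTheory Filter Real Set Topology

/-!
With `t = ρ^r - 1 ≍ ρ^r`, the outage event `ρX + ρ^α Y < t` lies between the boxes
`{X ≤ ρ^(r-1)/8} ∩ {Y ≤ ρ^(r-α)/8}` and `{X ≤ ρ^(r-1)} ∩ {Y ≤ ρ^(r-α)}` (the latter up to the null
set where `X` or `Y` is negative). By independence each box has probability `F(a) F(b)` with
`F(s) = 1 - e^(-s) ≍ min s 1`, and `min (ρ^a) 1 = ρ^(min a 0)`, so the outage probability is
`ρ^(min (r-1) 0 + min (r-α) 0)` up to a factor in `[1/256, 1]`, which disappears after taking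
`log · / log ρ`.
-/

lemma one_sub_exp_neg_le_min (s : ℝ) : 1 - exp (-s) ≤ min s 1 :=
  le_min (by linarith [one_sub_le_exp_neg s]) (by linarith [exp_pos (-s)])

lemma min_div_two_le_one_sub_exp_neg {s : ℝ} (hs : 0 ≤ s) : min s 1 / 2 ≤ 1 - exp (-s) := by
  have h1s : 0 < 1 + s := by linarith
  have hexp : exp (-s) ≤ 1 / (1 + s) := by
    rw [exp_neg, inv_eq_one_div, div_le_div_iff₀ (exp_pos s) h1s]
    linarith [add_one_le_exp s]
  have hfrac : min s 1 / 2 ≤ s / (1 + s) := by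
    rw [le_div_iff₀ h1s]
    rcases le_total s 1 with h | h
    · rw [min_eq_left h]; nlinarith
    · rw [min_eq_right h]; linarith
  have : s / (1 + s) = 1 - 1 / (1 + s) := by field_simp; ring
  linarith

lemma min_rpow_one_eq_rpow_min {ρ : ℝ} (hρ : 1 ≤ ρ) (a : ℝ) : min (ρ ^ a) 1 = ρ ^ min a 0 := by
  rw [(monotone_rpow_of_base_ge_one hρ).map_min, rpow_zero]

lemma rpow_mul_rpow_sub {ρ : ℝ} (hρ : 0 < ρ) (β r : ℝ) : ρ ^ β * ρ ^ (r - β) = ρ ^ r := by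
  rw [← rpow_add hρ, add_sub_cancel]

lemma one_sub_exp_neg_rpow_le {ρ : ℝ} (hρ : 1 ≤ ρ) (a : ℝ) : 1 - exp (-ρ ^ a) ≤ ρ ^ min a 0 :=
  (one_sub_exp_neg_le_min _).trans (min_rpow_one_eq_rpow_min hρ a).le

lemma le_one_sub_exp_neg_mul_rpow {ρ c : ℝ} (hρ : 1 ≤ ρ) (hc0 : 0 ≤ c) (hc1 : c ≤ 1) (a : ℝ) :
    c / 2 * ρ ^ min a 0 ≤ 1 - exp (-(c * ρ ^ a)) := by
  have hmin : c * min (ρ ^ a) 1 ≤ min (c * ρ ^ a) 1 := by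
    rw [mul_min_of_nonneg _ _ hc0, mul_one]
    exact min_le_min le_rfl hc1
  calc c / 2 * ρ ^ min a 0 = c * min (ρ ^ a) 1 / 2 := by
        rw [min_rpow_one_eq_rpow_min hρ]; ring
    _ ≤ min (c * ρ ^ a) 1 / 2 := by linarith
    _ ≤ 1 - exp (-(c * ρ ^ a)) :=
        min_div_two_le_one_sub_exp_neg (mul_nonneg hc0 (rpow_nonneg (by linarith) a))

lemma ae_nonneg_expMeasure {r : ℝ} (hr : 0 < r) : ∀ᵐ x ∂expMeasure r, 0 ≤ x := by
  have := isProbabilityMeasure_expMeasure hr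
  refine measure_mono_null (t := Iic 0) (fun x (hx : ¬ 0 ≤ x) => (not_le.mp hx).le) ?_
  rw [← ofReal_cdf, cdf_expMeasure_eq hr, if_pos le_rfl, mul_zero, neg_zero, exp_zero, sub_self,
    ENNReal.ofReal_zero]

lemma tendsto_log_div_log_of_rpow_bounds {f : ℝ → ℝ} {m C : ℝ} (hC : 0 < C)
    (hf : ∀ᶠ ρ in atTop, C * ρ ^ m ≤ f ρ ∧ f ρ ≤ ρ ^ m) :
    Tendsto (fun ρ => log (f ρ) / log ρ) atTop (𝓝 m) := by
  have hlow : Tendsto (fun ρ => m + log C / log ρ) atTop (𝓝 m) := by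
    simpa using tendsto_const_nhds.add (tendsto_const_nhds.div_atTop tendsto_log_atTop)
  have hbounds : ∀ᶠ ρ in atTop, m + log C / log ρ ≤ log (f ρ) / log ρ ∧ log (f ρ) / log ρ ≤ m := by
    filter_upwards [hf, eventually_gt_atTop 1] with ρ ⟨hlo, hup⟩ hρ
    have hρ0 : 0 < ρ := by linarith
    have hlogρ : 0 < log ρ := log_pos hρ
    have hCρ : 0 < C * ρ ^ m := by positivity
    constructor
    · rw [add_div' _ _ _ hlogρ.ne', div_le_div_iff_of_pos_right hlogρ]
      calc m * log ρ + log C = log (C * ρ ^ m) := by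
            rw [log_mul hC.ne' (rpow_pos_of_pos hρ0 m).ne', log_rpow hρ0, add_comm]
        _ ≤ log (f ρ) := log_le_log hCρ hlo
    · rw [div_le_iff₀ hlogρ, ← log_rpow hρ0]
      exact log_le_log (hCρ.trans_le hlo) hup
  exact tendsto_of_tendsto_of_tendsto_of_le_of_le' hlow tendsto_const_nhds
    (hbounds.mono fun _ h => h.1) (hbounds.mono fun _ h => h.2)

section Outage

variable {Ω : Type*} {X Y : Ω → ℝ}

def outage (X Y : Ω → ℝ) (α r ρ : ℝ) : Set Ω := {ω | ρ * X ω + ρ ^ α * Y ω < ρ ^ r - 1}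

lemma inter_preimage_Iic_subset_outage {α r ρ : ℝ} (hρ : 0 < ρ) (hρr : 2 ≤ ρ ^ r) :
    X ⁻¹' Iic (8⁻¹ * ρ ^ (r - 1)) ∩ Y ⁻¹' Iic (8⁻¹ * ρ ^ (r - α)) ⊆ outage X Y α r ρ := by
  rintro ω ⟨hx, hy⟩
  have hρX : ρ * X ω ≤ 8⁻¹ * ρ ^ r := by
    calc ρ * X ω ≤ ρ * (8⁻¹ * ρ ^ (r - 1)) := mul_le_mul_of_nonneg_left hx hρ.le
      _ = 8⁻¹ * ρ ^ r := by rw [mul_left_comm, ← rpow_mul_rpow_sub hρ 1 r, rpow_one]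
  have hρY : ρ ^ α * Y ω ≤ 8⁻¹ * ρ ^ r := by
    calc ρ ^ α * Y ω ≤ ρ ^ α * (8⁻¹ * ρ ^ (r - α)) :=
          mul_le_mul_of_nonneg_left hy (rpow_nonneg hρ.le α)
      _ = 8⁻¹ * ρ ^ r := by rw [mul_left_comm, rpow_mul_rpow_sub hρ]
  show ρ * X ω + ρ ^ α * Y ω < ρ ^ r - 1
  linarith

variable [MeasurableSpace Ω] {P : Measure Ω}

lemma measureReal_preimage_Iic_of_map_eq_expMeasure (hXm : Measurable X)
    (hX : P.map X = expMeasure 1) {s : ℝ} (hs : 0 ≤ s) :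
    P.real (X ⁻¹' Iic s) = 1 - exp (-s) := by
  have := isProbabilityMeasure_expMeasure one_pos
  rw [← map_measureReal_apply hXm measurableSet_Iic, hX, ← cdf_eq_real,
    cdf_expMeasure_eq one_pos, if_pos hs, one_mul]

lemma measureReal_inter_preimage_Iic_of_indepFun (hXm : Measurable X) (hYm : Measurable Y)
    (hX : P.map X = expMeasure 1) (hY : P.map Y = expMeasure 1) (hindep : IndepFun X Y P)
    {a b : ℝ} (ha : 0 ≤ a) (hb : 0 ≤ b) :
    P.real (X ⁻¹' Iic a ∩ Y ⁻¹' Iic b) = (1 - exp (-a)) * (1 - exp (-b)) := by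
  rw [measureReal_def, hindep.measure_inter_preimage_eq_mul _ _ measurableSet_Iic
    measurableSet_Iic, ENNReal.toReal_mul, ← measureReal_def, ← measureReal_def,
    measureReal_preimage_Iic_of_map_eq_expMeasure hXm hX ha,
    measureReal_preimage_Iic_of_map_eq_expMeasure hYm hY hb]

lemma outage_ae_subset_inter_preimage_Iic (hX0 : ∀ᵐ ω ∂P, 0 ≤ X ω) (hY0 : ∀ᵐ ω ∂P, 0 ≤ Y ω)
    {α r ρ : ℝ} (hρ : 0 < ρ) :
    outage X Y α r ρ ≤ᵐ[P] (X ⁻¹' Iic (ρ ^ (r - 1)) ∩ Y ⁻¹' Iic (ρ ^ (r - α)) : Set Ω) := by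
  filter_upwards [hX0, hY0] with ω hx hy (hω : ρ * X ω + ρ ^ α * Y ω < ρ ^ r - 1)
  have hρα : 0 < ρ ^ α := rpow_pos_of_pos hρ α
  constructor
  · show X ω ≤ ρ ^ (r - 1)
    rw [← rpow_mul_rpow_sub hρ 1 r, rpow_one] at hω
    exact le_of_mul_le_mul_left (by nlinarith [mul_nonneg hρα.le hy]) hρ
  · show Y ω ≤ ρ ^ (r - α)
    rw [← rpow_mul_rpow_sub hρ α r] at hω
    exact le_of_mul_le_mul_left (by nlinarith [mul_nonneg hρ.le hx]) hρα

lemma measureReal_outage_bounds [IsFiniteMeasure P] (hXm : Measurable X) (hYm : Measurable Y)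
    (hX : P.map X = expMeasure 1) (hY : P.map Y = expMeasure 1) (hindep : IndepFun X Y P)
    {α r ρ : ℝ} (hρ : 1 ≤ ρ) (hρr : 2 ≤ ρ ^ r) :
    256⁻¹ * ρ ^ (min (r - 1) 0 + min (r - α) 0) ≤ P.real (outage X Y α r ρ) ∧
      P.real (outage X Y α r ρ) ≤ ρ ^ (min (r - 1) 0 + min (r - α) 0) := by
  have hρ0 : 0 < ρ := by linarith
  have h8 : (0 : ℝ) ≤ 8⁻¹ := by norm_num
  have hX0 : ∀ᵐ ω ∂P, 0 ≤ X ω :=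
    ae_of_ae_map hXm.aemeasurable (by rw [hX]; exact ae_nonneg_expMeasure one_pos)
  have hY0 : ∀ᵐ ω ∂P, 0 ≤ Y ω :=
    ae_of_ae_map hYm.aemeasurable (by rw [hY]; exact ae_nonneg_expMeasure one_pos)
  have hlow (a : ℝ) := le_one_sub_exp_neg_mul_rpow hρ h8 (by norm_num) a
  rw [rpow_add hρ0]
  constructor
  · calc 256⁻¹ * (ρ ^ min (r - 1) 0 * ρ ^ min (r - α) 0)
          = (8⁻¹ / 2 * ρ ^ min (r - 1) 0) * (8⁻¹ / 2 * ρ ^ min (r - α) 0) := by ring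
      _ ≤ (1 - exp (-(8⁻¹ * ρ ^ (r - 1)))) * (1 - exp (-(8⁻¹ * ρ ^ (r - α)))) :=
          mul_le_mul (hlow _) (hlow _) (by positivity)
            ((by positivity : (0 : ℝ) ≤ _).trans (hlow _))
      _ = P.real (X ⁻¹' Iic (8⁻¹ * ρ ^ (r - 1)) ∩ Y ⁻¹' Iic (8⁻¹ * ρ ^ (r - α))) :=
          (measureReal_inter_preimage_Iic_of_indepFun hXm hYm hX hY hindep
            (by positivity) (by positivity)).symm
      _ ≤ P.real (outage X Y α r ρ) := measureReal_mono (inter_preimage_Iic_subset_outage hρ0 hρr)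
  · calc P.real (outage X Y α r ρ)
          ≤ P.real (X ⁻¹' Iic (ρ ^ (r - 1)) ∩ Y ⁻¹' Iic (ρ ^ (r - α))) :=
          ENNReal.toReal_mono (measure_ne_top _ _)
            (measure_mono_ae (outage_ae_subset_inter_preimage_Iic hX0 hY0 hρ0))
      _ = (1 - exp (-ρ ^ (r - 1))) * (1 - exp (-ρ ^ (r - α))) :=
          measureReal_inter_preimage_Iic_of_indepFun hXm hYm hX hY hindep
            (by positivity) (by positivity)
      _ ≤ ρ ^ min (r - 1) 0 * ρ ^ min (r - α) 0 :=
          mul_le_mul (one_sub_exp_neg_rpow_le hρ _) (one_sub_exp_neg_rpow_le hρ _)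
            (sub_nonneg.2 (exp_le_one_iff.2 (neg_nonpos.2 (by positivity)))) (by positivity)

end Outage

theorem stmt_11_general {Ω : Type*} [MeasurableSpace Ω] (P : Measure Ω) [IsProbabilityMeasure P]
    (X Y : Ω → ℝ) (hXm : Measurable X) (hYm : Measurable Y)
    (hX : Measure.map X P = expMeasure 1) (hY : Measure.map Y P = expMeasure 1)
    (hindep : IndepFun X Y P)
    (α r : ℝ) (hr : 0 < r) :
    Tendsto (fun ρ : ℝ =>
        Real.log (P {ω | ρ * X ω + ρ ^ α * Y ω < ρ ^ r - 1}).toReal / Real.log ρ)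
      atTop (nhds (-(max (1 - r) 0 + max (α - r) 0))) := by
  have hexponent : -(max (1 - r) 0 + max (α - r) 0) = min (r - 1) 0 + min (r - α) 0 := by
    rw [neg_add, ← min_neg_neg, ← min_neg_neg, neg_sub, neg_sub, neg_zero]
  rw [hexponent]
  refine tendsto_log_div_log_of_rpow_bounds (C := 256⁻¹) (by norm_num) ?_
  filter_upwards [eventually_ge_atTop 1, (tendsto_rpow_atTop hr).eventually_ge_atTop 2]
    with ρ hρ hρr
  exact measureReal_outage_bounds hXm hYm hX hY hindep hρ hρr

/-- Joint (sum-rate) outage exponent: for independent rate-1 exponential `X, Y`,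
`α ≥ 0` and `r > 0`, `P[ρX + ρ^α Y < ρ^r − 1] ≐ ρ^{−((1−r)^+ + (α−r)^+)}`. -/
theorem stmt_11 {Ω : Type*} [MeasurableSpace Ω] (P : Measure Ω) [IsProbabilityMeasure P]
    (X Y : Ω → ℝ) (hXm : Measurable X) (hYm : Measurable Y)
    (hX : Measure.map X P = expMeasure 1) (hY : Measure.map Y P = expMeasure 1)
    (hindep : IndepFun X Y P)
    (α r : ℝ) (hα : 0 ≤ α) (hr : 0 < r) :
    Tendsto (fun ρ : ℝ =>
        Real.log (P {ω | ρ * X ω + ρ ^ α * Y ω < ρ ^ r - 1}).toReal / Real.log ρ)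
      atTop (nhds (-(max (1 - r) 0 + max (α - r) 0))) :=
  stmt_11_general P X Y hXm hYm hX hY hindep α r hr
end
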